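/- arXiv:2511.12657 — 3 statements merged into one kernel-verified Lean document; each statement's English description precedes it below -/
import Mathlib

section
/- Let M be a monoid whose minimal ideal K is a rectangular band and let N be a monoid with minimal ideal J. Then S := (M × {1}) ∪ (K × N) is a submonoid of the product monoid M × N, the minimal ideal of S is K × J, and S is finite whenever M and N are finite. -/
def IsMulIdeal (S : Type) [Mul S] (I : Set S) : Prop :=
  I.Nonempty ∧ ∀ s x : S, x ∈ I → s * x ∈ I ∧ x * s ∈ I

/-- The minimal ideal of `S`: an ideal contained in every ideal. -/
def IsMinimalMulIdeal (S : Type) [Mul S] (I : Set S) : Prop :=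
  IsMulIdeal S I ∧ ∀ J : Set S, IsMulIdeal S J → I ⊆ J

/-- A subset `K` of `S` is a rectangular band if it is a nonempty subsemigroup
satisfying the identity `x * y * x = x`. -/
def IsRectangularBand (S : Type) [Mul S] (K : Set S) : Prop :=
  K.Nonempty ∧ (∀ x ∈ K, ∀ y ∈ K, x * y ∈ K) ∧ ∀ x ∈ K, ∀ y ∈ K, x * y * x = x

/-- Let `M` be a monoid whose minimal ideal `K` is a rectangular band and `N` a monoid with
minimal ideal `J`.  Then `S = (M × {1}) ∪ (K × N)` is a submonoid of `M × N`, the minimal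
ideal of `S` is `K × J`, and `S` is finite whenever `M` and `N` are finite. -/
theorem submonoid_wedge_construction (M N : Type) [Monoid M] [Monoid N]
    (K : Set M) (hK : IsMinimalMulIdeal M K) (hKrb : IsRectangularBand M K)
    (J : Set N) (hJ : IsMinimalMulIdeal N J) :
    (∃ S : Submonoid (M × N),
        (S : Set (M × N)) = (Set.univ ×ˢ ({1} : Set N)) ∪ (K ×ˢ (Set.univ : Set N))) ∧
      ∀ S : Submonoid (M × N),
        (S : Set (M × N)) = (Set.univ ×ˢ ({1} : Set N)) ∪ (K ×ˢ (Set.univ : Set N)) →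
          IsMinimalMulIdeal ↥S {x : ↥S | (x : M × N) ∈ K ×ˢ J} ∧
            (Finite M → Finite N → Finite ↥S) := by
  obtain ⟨k0, hk0⟩ := hK.1.1
  obtain ⟨j0, hj0⟩ := hJ.1.1
  constructor
  · refine ⟨⟨⟨(Set.univ ×ˢ ({1} : Set N)) ∪ (K ×ˢ (Set.univ : Set N)), ?_⟩, ?_⟩, rfl⟩
    · rintro ⟨a, b⟩ ⟨c, d⟩ hab hcd
      simp only [Set.mem_union, Set.mem_prod, Set.mem_univ, Set.mem_singleton_iff,
        true_and, and_true, Prod.mk_mul_mk] at hab hcd ⊢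
      rcases hab with hb | ha
      · rcases hcd with hd | hc
        · left; rw [hb, hd, one_mul]
        · right; exact (hK.1.2 a c hc).1
      · right; exact (hK.1.2 c a ha).2
    · left; simp
  · intro S hS
    have hmem : ∀ x : M × N, x ∈ S ↔ x.2 = 1 ∨ x.1 ∈ K := by
      intro x
      rw [← SetLike.mem_coe, hS]
      simp only [Set.mem_union, Set.mem_prod, Set.mem_univ, Set.mem_singleton_iff,
        true_and, and_true]
    constructor
    · constructor
      · constructor
        · -- ideal: nonempty
          refine ⟨⟨(k0, j0), (hmem _).2 (Or.inr hk0)⟩, ?_⟩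
          exact ⟨hk0, hj0⟩
        · rintro s x ⟨hx1, hx2⟩
          refine ⟨⟨(hK.1.2 _ _ hx1).1, (hJ.1.2 _ _ hx2).1⟩,
            ⟨(hK.1.2 _ _ hx1).2, (hJ.1.2 _ _ hx2).2⟩⟩
      · -- minimality
        intro I hI x hx
        obtain ⟨hxK, hxJ⟩ := hx
        -- first-coordinate ideal
        set T : Set M := {m | ∃ y : ↥S, y ∈ I ∧ (y : M × N).1 = m} with hT
        have hTideal : IsMulIdeal M T := by
          constructor
          · obtain ⟨y, hy⟩ := hI.1
            exact ⟨(y : M × N).1, y, hy, rfl⟩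
          · rintro s m ⟨y, hyI, hy1⟩
            have hsS : ((s, 1) : M × N) ∈ S := (hmem _).2 (Or.inl rfl)
            constructor
            · exact ⟨⟨(s, 1), hsS⟩ * y, (hI.2 _ _ hyI).1, by simp [hy1]⟩
            · exact ⟨y * ⟨(s, 1), hsS⟩, (hI.2 _ _ hyI).2, by simp [hy1]⟩
        obtain ⟨y1, hy1I, hy1k⟩ := hK.2 T hTideal hxK
        -- second-coordinate ideal
        set U : Set N := {n | ∃ y : ↥S, y ∈ I ∧ (y : M × N).1 ∈ K ∧ (y : M × N).2 = n}
          with hU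
        have hUideal : IsMulIdeal N U := by
          constructor
          · exact ⟨(y1 : M × N).2, y1, hy1I, by rw [hy1k]; exact hxK, rfl⟩
          · rintro s n ⟨y, hyI, hyK, hy2⟩
            have hzS : (((y : M × N).1, s) : M × N) ∈ S := (hmem _).2 (Or.inr hyK)
            constructor
            · refine ⟨⟨((y : M × N).1, s), hzS⟩ * y, (hI.2 _ _ hyI).1,
                hKrb.2.1 _ hyK _ hyK, by simp [hy2]⟩
            · refine ⟨y * ⟨((y : M × N).1, s), hzS⟩, (hI.2 _ _ hyI).2,
                hKrb.2.1 _ hyK _ hyK, by simp [hy2]⟩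
        obtain ⟨y2, hy2I, hy2K, hy2j⟩ := hJ.2 U hUideal hxJ
        -- sandwich with (k, 1)
        have hzS : (((x : M × N).1, 1) : M × N) ∈ S := (hmem _).2 (Or.inl rfl)
        set z : ↥S := ⟨((x : M × N).1, 1), hzS⟩ with hz
        have hfin : z * y2 * z ∈ I := (hI.2 _ _ (hI.2 _ _ hy2I).1).2
        have : z * y2 * z = x := by
          apply Subtype.ext
          have : ((z * y2 * z : ↥S) : M × N) =
              ((x : M × N).1 * (y2 : M × N).1 * (x : M × N).1,
               1 * (y2 : M × N).2 * 1) := rfl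
          rw [this, hKrb.2.2 _ hxK _ hy2K, one_mul, mul_one, hy2j]
        rwa [this] at hfin
    · intro _ _
      exact Subtype.finite
end

section
/- Let R be a unital ring and e ∈ R an idempotent such that the two-sided ideal ReR is projective as a left R-module. Then eR is projective as a left eRe-module, and consequently eQ is a projective left eRe-module for every projective left R-module Q. -/
/-- The underlying additive subgroup `eRe = {x | e * x = x ∧ x * e = x}` of a corner
of a ring. -/
def cornerAddSubgroup (R : Type) [Ring R] (e : R) : AddSubgroup R where
  carrier := {x | e * x = x ∧ x * e = x}
  zero_mem' := by simp
  add_mem' := by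
    rintro a b ⟨ha1, ha2⟩ ⟨hb1, hb2⟩
    constructor <;> simp [mul_add, add_mul, ha1, ha2, hb1, hb2]
  neg_mem' := by
    rintro a ⟨ha1, ha2⟩
    constructor <;> simp [ha1, ha2]

/-- The corner ring `eRe` of a ring `R` at an idempotent `e`; its identity element is `e`. -/
def CornerRing (R : Type) [Ring R] (e : R) (_he : IsIdempotentElem e) : Type :=
  ↥(cornerAddSubgroup R e)

namespace CornerRing

variable {R : Type} [Ring R] {e : R} (he : IsIdempotentElem e)

instance : AddCommGroup (CornerRing R e he) :=
  inferInstanceAs (AddCommGroup ↥(cornerAddSubgroup R e))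

instance : Ring (CornerRing R e he) :=
  { (inferInstanceAs (AddCommGroup ↥(cornerAddSubgroup R e)) : AddCommGroup (CornerRing R e he)) with
    mul := fun x y => ⟨x.1 * y.1, by
      obtain ⟨hx1, hx2⟩ := x.2
      obtain ⟨hy1, hy2⟩ := y.2
      constructor
      · rw [← mul_assoc, hx1]
      · rw [mul_assoc, hy2]⟩
    one := ⟨e, he, he⟩
    mul_assoc := fun x y z => Subtype.ext (mul_assoc x.1 y.1 z.1)
    one_mul := fun x => Subtype.ext x.2.1
    mul_one := fun x => Subtype.ext x.2.2
    left_distrib := fun x y z => Subtype.ext (left_distrib x.1 y.1 z.1)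
    right_distrib := fun x y z => Subtype.ext (right_distrib x.1 y.1 z.1)
    zero_mul := fun x => Subtype.ext (zero_mul x.1)
    mul_zero := fun x => Subtype.ext (mul_zero x.1) }

end CornerRing

/-- For an `R`-module `Q`, the corner module `eQ = {v | e • v = v}`, an `eRe`-module. -/
def CornerMod {R : Type} [Ring R] {e : R} (he : IsIdempotentElem e) (Q : Type)
    [AddCommGroup Q] [Module R Q] : Type :=
  {v : Q // e • v = v}

namespace CornerMod

variable {R : Type} [Ring R] {e : R} (he : IsIdempotentElem e) (Q : Type)
  [AddCommGroup Q] [Module R Q]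

instance : AddCommGroup (CornerMod he Q) :=
  inferInstanceAs (AddCommGroup ↥(AddSubgroup.mk
    (AddSubmonoid.mk ⟨{v : Q | e • v = v}, by
      rintro a b (ha : _ = _) (hb : _ = _)
      show e • (a + b) = a + b
      rw [smul_add, ha, hb]⟩ (by show e • (0:Q) = 0; simp))
    (by rintro a (ha : _ = _); show e • (-a) = -a; rw [smul_neg, ha])))

instance : Module (CornerRing R e he) (CornerMod he Q) where
  smul := fun x v => ⟨x.1 • v.1, by
    show e • (x.1 • v.1) = x.1 • v.1
    rw [← mul_smul, x.2.1]⟩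
  one_smul := fun v => Subtype.ext (by
    show e • v.1 = v.1
    exact v.2)
  mul_smul := fun x y v => Subtype.ext (mul_smul x.1 y.1 v.1)
  smul_zero := fun x => Subtype.ext (smul_zero x.1)
  smul_add := fun x v w => Subtype.ext (smul_add x.1 v.1 w.1)
  add_smul := fun x y v => Subtype.ext (add_smul x.1 y.1 v.1)
  zero_smul := fun v => Subtype.ext (zero_smul R v.1)

end CornerMod

/-- The two-sided ideal `ReR` generated by an element `e`, i.e. `TwoSidedIdeal.span {e}`. -/
noncomputable abbrev ReR (R : Type) [Ring R] (e : R) : TwoSidedIdeal R :=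
  TwoSidedIdeal.span {e}

/-- `ReR` as a left ideal (left `R`-submodule of `R`): the span of `{e * r | r ∈ R}`. -/
noncomputable def ReRleft (R : Type) [Ring R] (e : R) : Submodule R R :=
  Submodule.span R {x : R | ∃ r : R, x = e * r}

/-!
The functor `M ↦ eM` from left `R`-modules to left `eRe`-modules preserves retracts and direct
sums, and it sends `R` to `eR` and the left ideal `Re` to `eRe`. A projective `Q` is a retract of
a free module `R^(Q)`, so `eQ` is a retract of `(eR)^(Q)`, which is projective once `eR` is.
The ideal `ReR` is the image of `(Re)^(R) → ReR`, `(x_t) ↦ ∑ x_t t`; if `ReR` is projective this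
map splits, so `e(ReR) = eR` is a retract of the free module `(eRe)^(R)`.
-/

lemma exists_finsupp_span_singleton_retract_ReRleft (R : Type) [Ring R] (e : R)
    [Module.Projective R (ReRleft R e)] :
    ∃ (f : (R →₀ (R ∙ e)) →ₗ[R] ReRleft R e) (g : ReRleft R e →ₗ[R] (R →₀ (R ∙ e))),
      f ∘ₗ g = LinearMap.id := by
  have mulRight_mem (t : R) : ∀ x ∈ R ∙ e, LinearMap.mulRight R t x ∈ ReRleft R e := by
    intro x hx
    obtain ⟨a, rfl⟩ := Submodule.mem_span_singleton.1 hx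
    simpa [mul_assoc] using (ReRleft R e).smul_mem a (Submodule.subset_span ⟨t, rfl⟩)
  let f : (R →₀ (R ∙ e)) →ₗ[R] ReRleft R e :=
    Finsupp.lsum ℕ fun t => (LinearMap.mulRight R t).restrict (mulRight_mem t)
  have hle : ReRleft R e ≤ LinearMap.range ((ReRleft R e).subtype ∘ₗ f) := by
    refine Submodule.span_le.2 ?_
    rintro _ ⟨t, rfl⟩
    exact ⟨Finsupp.single t ⟨e, Submodule.mem_span_singleton_self e⟩, by simp [f]⟩
  have hf : Function.Surjective f := fun y => by
    obtain ⟨c, hc⟩ := hle y.2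
    exact ⟨c, Subtype.ext hc⟩
  exact ⟨f, f.exists_rightInverse_of_surjective (LinearMap.range_eq_top.2 hf)⟩

namespace CornerMod

variable {R : Type} [Ring R] {e : R} (he : IsIdempotentElem e)
  {M N : Type} [AddCommGroup M] [Module R M] [AddCommGroup N] [Module R N]

@[ext]
lemma ext {x y : CornerMod he M} (h : x.1 = y.1) : x = y :=
  Subtype.ext h

@[simp]
lemma zero_val : (0 : CornerMod he M).1 = 0 :=
  rfl

@[simp]
lemma add_val (x y : CornerMod he M) : (x + y).1 = x.1 + y.1 :=
  rfl

@[simp]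
lemma smul_val (a : CornerRing R e he) (x : CornerMod he M) : (a • x).1 = a.1 • x.1 :=
  rfl

def proj (m : M) : CornerMod he M :=
  ⟨e • m, by rw [smul_smul, he.eq]⟩

@[simp]
lemma val_proj (m : M) : (proj he m).1 = e • m :=
  rfl

@[simp]
lemma proj_val (x : CornerMod he M) : proj he x.1 = x :=
  ext he x.2

def map (f : M →ₗ[R] N) : CornerMod he M →ₗ[CornerRing R e he] CornerMod he N where
  toFun x := ⟨f x.1, by rw [← map_smul, x.2]⟩
  map_add' x y := ext he (map_add f x.1 y.1)
  map_smul' a x := ext he (map_smul f a.1 x.1)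

lemma map_comp_map {P : Type} [AddCommGroup P] [Module R P] (f : N →ₗ[R] P) (g : M →ₗ[R] N) :
    map he f ∘ₗ map he g = map he (f ∘ₗ g) :=
  rfl

lemma map_id : map he (LinearMap.id : M →ₗ[R] M) = LinearMap.id :=
  rfl

theorem projective_of_retract [Module.Projective (CornerRing R e he) (CornerMod he N)]
    (f : N →ₗ[R] M) (g : M →ₗ[R] N) (hfg : f ∘ₗ g = LinearMap.id) :
    Module.Projective (CornerRing R e he) (CornerMod he M) :=
  .of_split (map he g) (map he f) (by rw [map_comp_map, hfg, map_id])

noncomputable def finsuppEquiv (ι : Type) :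
    CornerMod he (ι →₀ M) ≃ₗ[CornerRing R e he] (ι →₀ CornerMod he M) where
  toFun x := x.1.mapRange (proj he) (ext he (smul_zero e))
  invFun y := ⟨y.mapRange (fun x : CornerMod he M => x.1) (zero_val he), by ext i; simp [(y i).2]⟩
  map_add' x y := by ext i; simp
  map_smul' a x := by
    ext i
    simp only [Finsupp.mapRange_apply, Finsupp.smul_apply, RingHom.id_apply, smul_val, val_proj,
      smul_smul, a.2.1, a.2.2]
  left_inv x := by ext i; simpa using congrArg (· i) x.2
  right_inv y := by ext i; simp

instance [Module.Projective (CornerRing R e he) (CornerMod he M)] (ι : Type) :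
    Module.Projective (CornerRing R e he) (CornerMod he (ι →₀ M)) := by
  classical
  have := Module.Projective.of_equiv (finsuppLequivDFinsupp (M := CornerMod he M) (ι := ι)
    (CornerRing R e he)).symm
  exact .of_equiv (finsuppEquiv he ι).symm

def submoduleEquiv (L : Submodule R M) (hL : ∀ m : M, e • m ∈ L) :
    CornerMod he L ≃ₗ[CornerRing R e he] CornerMod he M where
  __ := map he L.subtype
  invFun x := ⟨⟨x.1, x.2 ▸ hL x.1⟩, Subtype.ext x.2⟩
  left_inv _ := rfl
  right_inv _ := rfl

def spanSingletonEquiv : CornerMod he (R ∙ e) ≃ₗ[CornerRing R e he] CornerRing R e he where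
  toFun x := ⟨x.1.1, congrArg Subtype.val x.2, by
    obtain ⟨a, ha⟩ := Submodule.mem_span_singleton.1 x.1.2
    rw [← ha, smul_eq_mul, mul_assoc, he.eq]⟩
  invFun a := ⟨⟨a.1, Submodule.mem_span_singleton.2 ⟨a.1, a.2.2⟩⟩, Subtype.ext a.2.1⟩
  map_add' _ _ := rfl
  map_smul' _ _ := rfl
  left_inv _ := rfl
  right_inv _ := rfl

theorem projective_of_projective [Module.Projective (CornerRing R e he) (CornerMod he R)]
    {Q : Type} [AddCommGroup Q] [Module R Q] [Module.Projective R Q] :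
    Module.Projective (CornerRing R e he) (CornerMod he Q) := by
  obtain ⟨s, hs⟩ := Module.projective_def'.1 ‹Module.Projective R Q›
  exact projective_of_retract he _ s hs

theorem projective_self_of_projective_ReRleft [Module.Projective R (ReRleft R e)] :
    Module.Projective (CornerRing R e he) (CornerMod he R) := by
  obtain ⟨f, g, hfg⟩ := exists_finsupp_span_singleton_retract_ReRleft R e
  have : Module.Projective (CornerRing R e he) (CornerMod he (R ∙ e)) :=
    .of_equiv (spanSingletonEquiv he).symm
  have := projective_of_retract he f g hfg
  exact .of_equiv (submoduleEquiv he (ReRleft R e) fun m => Submodule.subset_span ⟨m, rfl⟩)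

end CornerMod

/-- If `ReR` is projective as a left `R`-module, then `eR` is projective as a left
`eRe`-module, and consequently `eQ` is a projective left `eRe`-module for every
projective left `R`-module `Q`. -/
theorem corner_projective (R : Type) [Ring R] (e : R) (he : IsIdempotentElem e)
    (hReR : Module.Projective R ↥(ReRleft R e)) :
    Module.Projective (CornerRing R e he) (CornerMod he R) ∧
      ∀ (Q : Type) [AddCommGroup Q] [Module R Q], Module.Projective R Q →
        Module.Projective (CornerRing R e he) (CornerMod he Q) := by
  have := CornerMod.projective_self_of_projective_ReRleft he
  exact ⟨this, fun Q _ _ _ => CornerMod.projective_of_projective he⟩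
end

section
/- Let M be a finite monoid with zero element z, and let I be a 0-minimal ideal of M that is 0-simple. Then for any commutative unital ring K, the image of the K-span of I in the contracted monoid algebra K₀M := KM/(K·z) equals the image of the K-span of MeM for some nonzero idempotent e ∈ I, and this image is a projective left K₀M-module. -/
/-- The contracted monoid algebra `K₀M = KM/(K·z)` of a monoid with zero element `z`:
the quotient of the monoid algebra by the two-sided ideal generated by `z`. -/
noncomputable def ContractedAlgebra (K : Type) [CommRing K] (M : Type) [Monoid M]
    (z : M) : Type :=
  (TwoSidedIdeal.span {MonoidAlgebra.single z (1 : K)}).ringCon.Quotient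

noncomputable instance (K : Type) [CommRing K] (M : Type) [Monoid M] (z : M) :
    Ring (ContractedAlgebra K M z) :=
  inferInstanceAs (Ring (TwoSidedIdeal.span {MonoidAlgebra.single z (1 : K)}).ringCon.Quotient)

/-- The quotient map `KM → K₀M`. -/
noncomputable def contractedProj (K : Type) [CommRing K] (M : Type) [Monoid M] (z : M) :
    MonoidAlgebra K M →+* ContractedAlgebra K M z :=
  (TwoSidedIdeal.span {MonoidAlgebra.single z (1 : K)}).ringCon.mk'

/-- The `K`-span of a subset `T ⊆ M` inside the monoid algebra `KM`. -/
noncomputable def kSpan (K : Type) [CommRing K] (M : Type) [Monoid M] (T : Set M) :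
    Set (MonoidAlgebra K M) :=
  ↑(Submodule.span K ((fun m => MonoidAlgebra.single m (1 : K)) '' T))

/-!
Every nonzero `x ∈ I` generates `I` as a two-sided ideal. Since some power of every element of a
finite monoid is idempotent, `x = p x q` forces `pⁿ x = x = x qⁿ`; this makes every nonzero
`x ∈ I` regular (using `I·I ≠ {z}`) and shows that a nonzero left multiple `m x` generates the
same left ideal as `x`. So `I \ {z}` is partitioned by the sets `Mx \ {z}`, and the image of `KI`
in `K₀M` is the direct sum of the left ideals `K₀M·x̄ᵢ` over representatives `xᵢ`. Choosing
`xᵢ vᵢ xᵢ = xᵢ`, the map `(rᵢ) ↦ (rᵢ x̄ᵢ v̄ᵢ)` induces a section of `(rᵢ) ↦ Σ rᵢ x̄ᵢ`, so this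
sum is a direct summand of a free module.
-/

theorem Module.Projective.range_of_comp_eq_of_ker_le {R F N : Type*} [Ring R]
    [AddCommGroup F] [Module R F] [Module.Projective R F] [AddCommGroup N] [Module R N]
    (g : F →ₗ[R] N) (e : F →ₗ[R] F) (hge : g ∘ₗ e = g) (hker : LinearMap.ker g ≤ LinearMap.ker e) :
    Module.Projective R (LinearMap.range g) := by
  have hsurj := g.surjective_rangeRestrict
  let σ := (LinearMap.ker g.rangeRestrict).liftQ e (by rwa [LinearMap.ker_rangeRestrict]) ∘ₗ
    (g.rangeRestrict.quotKerEquivOfSurjective hsurj).symm.toLinearMap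
  refine .of_split σ g.rangeRestrict (LinearMap.ext fun y => ?_)
  obtain ⟨r, rfl⟩ := hsurj y
  have hσ : σ (g.rangeRestrict r) = e r := by
    simp [σ, LinearMap.quotKerEquivOfSurjective_symm_apply]
  rw [LinearMap.comp_apply, hσ]
  exact Subtype.ext (LinearMap.congr_fun hge r)

theorem Module.Projective.span_range_of_regular {R ι : Type*} [Ring R] [Fintype ι]
    (x v : ι → R) (hreg : ∀ i, x i * v i * x i = x i)
    (hind : ∀ r : ι → R, ∑ i, r i * x i = 0 → ∀ i, r i * x i = 0) :
    Module.Projective R (Submodule.span R (Set.range x)) := by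
  rw [← Fintype.range_linearCombination]
  refine .range_of_comp_eq_of_ker_le _
    (LinearMap.pi fun i => LinearMap.toSpanSingleton R R (x i * v i) ∘ₗ LinearMap.proj i) ?_ ?_
  · ext r : 1
    simp [Fintype.linearCombination_apply, mul_assoc, hreg]
  · intro r hr
    ext i
    simp only [LinearMap.mem_ker, Fintype.linearCombination_apply, smul_eq_mul] at hr
    simp [← mul_assoc, hind r hr i]

section Monoid

variable {M : Type*} [Monoid M]

theorem exists_isIdempotentElem_pow_succ [Finite M] (a : M) :
    ∃ n : ℕ, IsIdempotentElem (a ^ (n + 1)) := by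
  let _ : TopologicalSpace M := ⊥
  have : DiscreteTopology M := ⟨rfl⟩
  obtain ⟨_, ⟨n, rfl⟩, h⟩ := exists_idempotent_in_compact_subsemigroup
    (fun _ => continuous_of_discreteTopology) (Set.range fun n : ℕ => a ^ (n + 1))
    (Set.range_nonempty _) (Set.toFinite _).isCompact
    (by rintro _ ⟨i, rfl⟩ _ ⟨j, rfl⟩; exact ⟨i + j + 1, by rw [← pow_add]; ring_nf⟩)
  exact ⟨n, h⟩

theorem eq_pow_mul_mul_pow {p x q : M} (h : x = p * x * q) (k : ℕ) :
    x = p ^ k * x * q ^ k := by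
  induction k with
  | zero => simp
  | succ k ih =>
    calc x = p ^ k * (p * x * q) * q ^ k := by rw [← h, ← ih]
      _ = p ^ (k + 1) * x * q ^ (k + 1) := by rw [pow_succ p, pow_succ' q]; simp only [mul_assoc]

theorem pow_mul_eq_self_of_eq_mul_mul {p x q : M} {n : ℕ} (hp : IsIdempotentElem (p ^ n))
    (h : x = p * x * q) : p ^ n * x = x := by
  rw [eq_pow_mul_mul_pow h n, ← mul_assoc, ← mul_assoc, hp.eq]

theorem mul_pow_eq_self_of_eq_mul_mul {p x q : M} {n : ℕ} (hq : IsIdempotentElem (q ^ n))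
    (h : x = p * x * q) : x * q ^ n = x := by
  rw [eq_pow_mul_mul_pow h n, mul_assoc, hq.eq]

end Monoid

section ZeroMinimal

variable {M : Type} [Monoid M] {z : M} {I : Set M}

theorem setOf_exists_mul_mul_eq (hI : IsMulIdeal M I)
    (hmin : ∀ J : Set M, IsMulIdeal M J → J ⊆ I → J = {z} ∨ J = I)
    {x : M} (hx : x ∈ I) (hxz : x ≠ z) :
    {y : M | ∃ a b : M, y = a * x * b} = I := by
  refine (hmin {y | ∃ a b, y = a * x * b} ⟨⟨x, 1, 1, by simp⟩, ?_⟩ ?_).resolve_left fun h => hxz ?_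
  · rintro s _ ⟨a, b, rfl⟩
    exact ⟨⟨s * a, b, by simp only [mul_assoc]⟩, ⟨a, b * s, by simp only [mul_assoc]⟩⟩
  · rintro _ ⟨a, b, rfl⟩
    exact (hI.2 b _ (hI.2 a x hx).1).2
  · exact h.subset ⟨1, 1, by simp⟩

theorem exists_eq_mul_mul_of_mem (hI : IsMulIdeal M I)
    (hmin : ∀ J : Set M, IsMulIdeal M J → J ⊆ I → J = {z} ∨ J = I)
    {x y : M} (hx : x ∈ I) (hxz : x ≠ z) (hy : y ∈ I) : ∃ a b : M, y = a * x * b := by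
  rwa [← setOf_exists_mul_mul_eq hI hmin hx hxz] at hy

theorem exists_mul_mul_eq_of_mul_ne [Finite M] (hI : IsMulIdeal M I)
    (hmin : ∀ J : Set M, IsMulIdeal M J → J ⊆ I → J = {z} ∨ J = I)
    {x m : M} (hx : x ∈ I) (hmx : m * x ≠ z) : ∃ m' : M, m' * (m * x) = x := by
  obtain ⟨u, w, h⟩ := exists_eq_mul_mul_of_mem hI hmin (hI.2 m x hx).1 hmx hx
  obtain ⟨n, hn⟩ := exists_isIdempotentElem_pow_succ (u * m)
  refine ⟨(u * m) ^ n * u, ?_⟩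
  calc (u * m) ^ n * u * (m * x) = (u * m) ^ (n + 1) * x := by simp only [pow_succ, mul_assoc]
    _ = x := pow_mul_eq_self_of_eq_mul_mul hn (by rwa [mul_assoc u])

theorem range_mul_mul_eq_range_mul [Finite M] (hI : IsMulIdeal M I)
    (hmin : ∀ J : Set M, IsMulIdeal M J → J ⊆ I → J = {z} ∨ J = I)
    {x m : M} (hx : x ∈ I) (hmx : m * x ≠ z) :
    Set.range (· * (m * x)) = Set.range (· * x) := by
  obtain ⟨m', hm'⟩ := exists_mul_mul_eq_of_mul_ne hI hmin hx hmx
  refine subset_antisymm ?_ ?_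
  · rintro _ ⟨n, rfl⟩
    exact ⟨n * m, by simp only [mul_assoc]⟩
  · rintro _ ⟨n, rfl⟩
    exact ⟨n * m', by simp only [mul_assoc, hm']⟩

theorem exists_mul_mul_eq_self [Finite M] (hz : ∀ m : M, z * m = z ∧ m * z = z)
    (hI : IsMulIdeal M I)
    (hmin : ∀ J : Set M, IsMulIdeal M J → J ⊆ I → J = {z} ∨ J = I)
    (hsq : ∃ a ∈ I, ∃ b ∈ I, a * b ≠ z) {x : M} (hx : x ∈ I) (hxz : x ≠ z) :
    ∃ v : M, x * v * x = x := by
  obtain ⟨u, hu⟩ : ∃ u, x * u * x ≠ z := by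
    by_contra! h
    obtain ⟨a, ha, b, hb, hab⟩ := hsq
    obtain ⟨p, q, rfl⟩ := exists_eq_mul_mul_of_mem hI hmin hx hxz ha
    obtain ⟨p', q', rfl⟩ := exists_eq_mul_mul_of_mem hI hmin hx hxz hb
    apply hab
    calc p * x * q * (p' * x * q') = p * (x * (q * p') * x) * q' := by simp only [mul_assoc]
      _ = z := by rw [h, (hz p).2, (hz q').1]
  obtain ⟨m', hm'⟩ := exists_mul_mul_eq_of_mul_ne hI hmin hx hu
  obtain ⟨n, hn⟩ := exists_isIdempotentElem_pow_succ (u * x)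
  refine ⟨(u * x) ^ n * u, ?_⟩
  calc x * ((u * x) ^ n * u) * x = x * (u * x) ^ (n + 1) := by simp only [pow_succ, mul_assoc]
    _ = x := mul_pow_eq_self_of_eq_mul_mul (p := m') hn (by simpa only [mul_assoc] using hm'.symm)

theorem exists_transversal_range_mul [Finite M] (hI : IsMulIdeal M I)
    (hmin : ∀ J : Set M, IsMulIdeal M J → J ⊆ I → J = {z} ∨ J = I) :
    ∃ X : Set M, (∀ x ∈ X, x ∈ I ∧ x ≠ z) ∧ (∀ y ∈ I, y ≠ z → ∃ x ∈ X, ∃ m, y = m * x) ∧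
      ∀ x ∈ X, ∀ x' ∈ X, ∀ m m' : M, m * x = m' * x' → m * x ≠ z → x = x' := by
  let column : ↥(I \ {z}) → Set M := fun y => Set.range (· * y.1)
  let rep : Set.range column → M := fun L => (Set.rangeSplitting column L).1
  have hrep : ∀ L, Set.range (· * rep L) = L := Set.apply_rangeSplitting column
  refine ⟨Set.range rep, ?_, fun y hy hyz => ?_, ?_⟩
  · rintro _ ⟨L, rfl⟩
    exact (Set.rangeSplitting column L).2
  · obtain ⟨m, hm⟩ : y ∈ Set.range (· * rep ⟨_, ⟨y, hy, hyz⟩, rfl⟩) := by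
      rw [hrep]
      exact ⟨1, one_mul y⟩
    exact ⟨_, ⟨_, rfl⟩, m, hm.symm⟩
  · rintro _ ⟨L, rfl⟩ _ ⟨L', rfl⟩ m m' h hmz
    have hI' : ∀ L, rep L ∈ I := fun L => (Set.rangeSplitting column L).2.1
    have hLL' : L = L' := Subtype.ext <| by
      rw [← hrep L, ← hrep L', ← range_mul_mul_eq_range_mul hI hmin (hI' L) hmz,
        ← range_mul_mul_eq_range_mul hI hmin (hI' L') (h ▸ hmz), h]
    rw [hLL']

end ZeroMinimal

section ContractedAlgebra

open MonoidAlgebra Submodule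

variable {K : Type} [CommRing K] {M : Type} [Monoid M] {z : M} {ι : Type}

theorem contractedProj_surjective : Function.Surjective (contractedProj K M z) :=
  RingCon.mk'_surjective _

theorem contractedProj_eq_zero_iff_mem_span {w : MonoidAlgebra K M} :
    contractedProj K M z w = 0 ↔ w ∈ TwoSidedIdeal.span {single z (1 : K)} := by
  rw [← map_zero (contractedProj K M z), TwoSidedIdeal.mem_iff]
  exact RingCon.eq _

theorem contractedProj_single_zero (k : K) : contractedProj K M z (single z k) = 0 := by
  rw [contractedProj_eq_zero_iff_mem_span,
    show single z k = single 1 k * single z (1 : K) by simp [single_mul_single]]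
  exact TwoSidedIdeal.mul_mem_left _ _ _ (TwoSidedIdeal.subset_span rfl)

theorem exists_mul_single_eq_single (hz : ∀ m : M, m * z = z) (x : MonoidAlgebra K M) (k : K) :
    ∃ c : K, x * single z k = single z c := by
  induction x using MonoidAlgebra.induction_linear with
  | zero => exact ⟨0, by simp⟩
  | add x y hx hy =>
    obtain ⟨⟨a, ha⟩, ⟨b, hb⟩⟩ := And.intro hx hy
    exact ⟨a + b, by rw [add_mul, ha, hb, single_add]⟩
  | single m r => exact ⟨r * k, by rw [single_mul_single, hz]⟩

theorem exists_single_mul_eq_single (hz : ∀ m : M, z * m = z) (x : MonoidAlgebra K M) (k : K) :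
    ∃ c : K, single z k * x = single z c := by
  induction x using MonoidAlgebra.induction_linear with
  | zero => exact ⟨0, by simp⟩
  | add x y hx hy =>
    obtain ⟨⟨a, ha⟩, ⟨b, hb⟩⟩ := And.intro hx hy
    exact ⟨a + b, by rw [mul_add, ha, hb, single_add]⟩
  | single m r => exact ⟨k * r, by rw [single_mul_single, hz]⟩

theorem contractedProj_eq_zero_iff (hz : ∀ m : M, z * m = z ∧ m * z = z)
    (w : MonoidAlgebra K M) : contractedProj K M z w = 0 ↔ ∃ k : K, single z k = w := by
  refine ⟨fun h => ?_, fun ⟨k, hk⟩ => hk ▸ contractedProj_single_zero k⟩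
  let Kz : TwoSidedIdeal (MonoidAlgebra K M) := .mk' (Set.range (single z : K → MonoidAlgebra K M))
    ⟨0, single_zero z⟩ (by rintro _ _ ⟨a, rfl⟩ ⟨b, rfl⟩; exact ⟨a + b, single_add z a b⟩)
    (by rintro _ ⟨a, rfl⟩; exact ⟨-a, single_neg z a⟩)
    (by rintro x _ ⟨a, rfl⟩
        exact (exists_mul_single_eq_single (fun m => (hz m).2) x a).imp fun _ h => h.symm)
    (by rintro _ y ⟨a, rfl⟩
        exact (exists_single_mul_eq_single (fun m => (hz m).1) y a).imp fun _ h => h.symm)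
  have hspan : TwoSidedIdeal.span {single z (1 : K)} ≤ Kz :=
    TwoSidedIdeal.span_le.mpr <|
      Set.singleton_subset_iff.mpr ((TwoSidedIdeal.mem_mk' ..).mpr ⟨1, rfl⟩)
  exact (TwoSidedIdeal.mem_mk' _ _ _ _ _ _ w).mp (hspan (contractedProj_eq_zero_iff_mem_span.mp h))

theorem contractedProj_erase (w : MonoidAlgebra K M) :
    contractedProj K M z (w.erase z) = contractedProj K M z w := by
  conv_rhs => rw [← single_add_erase z w, map_add, contractedProj_single_zero, zero_add]

theorem eq_zero_of_contractedProj_eq_zero (hz : ∀ m : M, z * m = z ∧ m * z = z)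
    {w : MonoidAlgebra K M} (hwz : w.coeff z = 0) (h : contractedProj K M z w = 0) : w = 0 := by
  obtain ⟨k, rfl⟩ := (contractedProj_eq_zero_iff hz w).mp h
  simpa using hwz

theorem mul_mem_kSpan {T : Set M} (hT : ∀ m y, y ∈ T → m * y ∈ T) (u : MonoidAlgebra K M)
    {w : MonoidAlgebra K M} (hw : w ∈ kSpan K M T) : u * w ∈ kSpan K M T := by
  classical
  rw [kSpan, ← supported_eq_span_single] at hw ⊢
  intro m hm
  obtain ⟨a, -, b, hb, rfl⟩ := Finset.mem_mul.mp (support_coeff_mul_subset u w hm)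
  exact hT a b (hw hb)

theorem image_kSpan_eq_span {T : Set M} (hT : ∀ m y, y ∈ T → m * y ∈ T) :
    contractedProj K M z '' kSpan K M T =
      span (ContractedAlgebra K M z) ((fun m => contractedProj K M z (single m 1)) '' T) := by
  apply subset_antisymm
  · rintro _ ⟨w, hw, rfl⟩
    induction hw using Submodule.span_induction with
    | mem _ h => obtain ⟨m, hm, rfl⟩ := h; exact subset_span ⟨m, hm, rfl⟩
    | zero => rw [map_zero]; exact zero_mem _
    | add _ _ _ _ h₁ h₂ => rw [map_add]; exact add_mem h₁ h₂
    | smul k w _ h =>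
      rw [Algebra.smul_def, map_mul]
      exact smul_mem _ _ h
  · intro _ hx
    induction hx using Submodule.span_induction with
    | mem _ h => obtain ⟨m, hm, rfl⟩ := h; exact ⟨single m 1, subset_span ⟨m, hm, rfl⟩, rfl⟩
    | zero => exact ⟨0, (span _ _).zero_mem, map_zero _⟩
    | add _ _ _ _ h₁ h₂ =>
      obtain ⟨⟨w₁, hw₁, rfl⟩, ⟨w₂, hw₂, rfl⟩⟩ := And.intro h₁ h₂
      exact ⟨w₁ + w₂, (span _ _).add_mem hw₁ hw₂, map_add _ _ _⟩
    | smul r _ _ h =>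
      obtain ⟨w, hw, rfl⟩ := h
      obtain ⟨u, rfl⟩ := contractedProj_surjective r
      exact ⟨u * w, mul_mem_kSpan hT u hw, map_mul _ _ _⟩

theorem span_image_eq_span_range {T : Set M} (x : ι → M) (hx : ∀ i, x i ∈ T)
    (hcover : ∀ y ∈ T, y ≠ z → ∃ i m, y = m * x i) :
    span (ContractedAlgebra K M z) ((fun m => contractedProj K M z (single m 1)) '' T) =
      span (ContractedAlgebra K M z)
        (Set.range fun i => contractedProj K M z (single (x i) 1)) := by
  refine le_antisymm (span_le.mpr ?_) (span_mono ?_)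
  · rintro _ ⟨y, hy, rfl⟩
    by_cases hyz : y = z
    · simp only [hyz, contractedProj_single_zero, SetLike.mem_coe, zero_mem]
    obtain ⟨i, m, rfl⟩ := hcover y hy hyz
    have hmul : contractedProj K M z (single (m * x i) 1) =
        contractedProj K M z (single m 1) * contractedProj K M z (single (x i) 1) := by
      rw [← map_mul, single_mul_single, one_mul]
    simp only [SetLike.mem_coe, hmul]
    exact smul_mem _ _ (subset_span ⟨i, rfl⟩)
  · rintro _ ⟨i, rfl⟩
    exact ⟨x i, hx i, rfl⟩

theorem mul_contractedProj_eq_zero_of_sum_eq_zero [Fintype ι]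
    (hz : ∀ m : M, z * m = z ∧ m * z = z) (x : ι → M)
    (hdisj : ∀ i j (m m' : M), m * x i = m' * x j → m * x i ≠ z → i = j)
    (r : ι → ContractedAlgebra K M z)
    (h : ∑ i, r i * contractedProj K M z (single (x i) 1) = 0) (i : ι) :
    r i * contractedProj K M z (single (x i) 1) = 0 := by
  classical
  -- Lift each summand to `KM` with support in `M xᵢ \ {z}`: these supports are pairwise disjoint
  -- and avoid `z`, which carries the whole kernel `K·z`.
  choose u hu using fun i => contractedProj_surjective (z := z) (r i)
  set w : ι → MonoidAlgebra K M := fun i => (u i * single (x i) 1).erase z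
  have hπw : ∀ i, contractedProj K M z (w i) = r i * contractedProj K M z (single (x i) 1) := by
    intro i
    rw [contractedProj_erase, map_mul, hu]
  have hsupp : ∀ i y, (w i).coeff y ≠ 0 → y ≠ z ∧ ∃ m, m * x i = y := by
    intro i y hy
    rw [coeff_erase, Finsupp.erase_apply] at hy
    split_ifs at hy with hyz
    · exact absurd rfl hy
    · refine ⟨hyz, ?_⟩
      by_contra! hne
      exact hy (coeff_mul_single_of_forall_mul_ne _ _ hne)
  have hsum : ∑ i, w i = 0 := by
    refine eq_zero_of_contractedProj_eq_zero hz ?_ (by rw [map_sum]; simp only [hπw, h])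
    simp [w, coeff_sum, coeff_erase]
  have hwi : w i = 0 := by
    ext y
    by_contra hy
    obtain ⟨hyz, m, rfl⟩ := hsupp i _ hy
    have := congr(($hsum).coeff (m * x i))
    rw [coeff_sum, Finset.sum_apply', Finset.sum_eq_single i] at this
    · exact hy this
    · intro j _ hji
      by_contra hj
      obtain ⟨-, m', hm'⟩ := hsupp j _ hj
      exact hji (hdisj i j m m' hm'.symm hyz).symm
    · simp
  rw [← hπw, hwi, map_zero]

end ContractedAlgebra

theorem exists_projective_submodule_eq_image_kSpan {M : Type} [Monoid M] [Finite M] {z : M}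
    (hz : ∀ m : M, z * m = z ∧ m * z = z) {I : Set M} (hI : IsMulIdeal M I)
    (hmin : ∀ J : Set M, IsMulIdeal M J → J ⊆ I → J = {z} ∨ J = I)
    (hsq : ∃ a ∈ I, ∃ b ∈ I, a * b ≠ z) (K : Type) [CommRing K] :
    ∃ S : Submodule (ContractedAlgebra K M z) (ContractedAlgebra K M z),
      (S : Set (ContractedAlgebra K M z)) = contractedProj K M z '' kSpan K M I ∧
        Module.Projective (ContractedAlgebra K M z) S := by
  obtain ⟨X, hX, hcover, hdisj⟩ := exists_transversal_range_mul hI hmin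
  have : Fintype X := Fintype.ofFinite X
  choose v hv using fun x : X => exists_mul_mul_eq_self hz hI hmin hsq (hX x.1 x.2).1 (hX x.1 x.2).2
  let xbar : X → ContractedAlgebra K M z := fun x => contractedProj K M z (.single x.1 1)
  refine ⟨Submodule.span _ (Set.range xbar), ?_, ?_⟩
  · rw [image_kSpan_eq_span fun m y hy => (hI.2 m y hy).1,
      span_image_eq_span_range Subtype.val (fun x => (hX x.1 x.2).1) fun y hy hyz => by
        obtain ⟨x, hx, hm⟩ := hcover y hy hyz
        exact ⟨⟨x, hx⟩, hm⟩]
  · refine .span_range_of_regular xbar (fun x => contractedProj K M z (.single (v x) 1))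
      (fun x => ?_) (mul_contractedProj_eq_zero_of_sum_eq_zero hz Subtype.val
        fun x x' m m' h hmz => Subtype.ext (hdisj x x.2 x' x'.2 m m' h hmz))
    simp only [xbar, ← map_mul, MonoidAlgebra.single_mul_single, one_mul, hv]

/-- Let `M` be a finite monoid with zero `z` and `I` a `0`-minimal ideal of `M` that is
`0`-simple.  Then for any commutative ring `K`, the image of the `K`-span of `I` in the
contracted algebra `K₀M` equals the image of the `K`-span of `MeM` for some nonzero
idempotent `e ∈ I`, and this image is a projective left `K₀M`-module. -/
theorem contracted_ideal_projective (M : Type) [Monoid M] [Finite M] (z : M)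
    (hz : ∀ m : M, z * m = z ∧ m * z = z)
    (I : Set M) (hI : IsMulIdeal M I)
    (hmin : I ≠ {z} ∧ ∀ J : Set M, IsMulIdeal M J → J ⊆ I → J = {z} ∨ J = I)
    (hsimple : (∃ a ∈ I, ∃ b ∈ I, a * b ≠ z) ∧
      ∀ J : Set M, J ⊆ I → J.Nonempty →
        (∀ s ∈ I, ∀ x ∈ J, s * x ∈ J ∧ x * s ∈ J) → J = {z} ∨ J = I)
    (K : Type) [CommRing K] :
    ∃ e ∈ I, e ≠ z ∧ IsIdempotentElem e ∧
      (contractedProj K M z) '' (kSpan K M I) =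
        (contractedProj K M z) '' (kSpan K M {x : M | ∃ a b : M, x = a * e * b}) ∧
      ∃ S : Submodule (ContractedAlgebra K M z) (ContractedAlgebra K M z),
        (S : Set (ContractedAlgebra K M z)) = (contractedProj K M z) '' (kSpan K M I) ∧
          Module.Projective (ContractedAlgebra K M z) ↥S := by
  obtain ⟨a, ha, b, -, hab⟩ := hsimple.1
  have haz : a ≠ z := fun h => hab (by rw [h, (hz b).1])
  obtain ⟨v, hv⟩ := exists_mul_mul_eq_self hz hI hmin.2 hsimple.1 ha haz
  have hez : a * v ≠ z := fun h => haz (by rw [← hv, h, (hz a).1])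
  refine ⟨a * v, (hI.2 v a ha).2, hez, by rw [IsIdempotentElem, ← mul_assoc, hv], ?_,
    exists_projective_submodule_eq_image_kSpan hz hI hmin.2 hsimple.1 K⟩
  rw [setOf_exists_mul_mul_eq hI hmin.2 (hI.2 v a ha).2 hez]
end
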